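/- Let n ≥ 1, let m > 0 and j ≥ 0 be real numbers, let ρ₀ > 0, and let q : (ℝ^n \ {0}) × ℂ → ℂ be a continuous function satisfying q(tξ, t^m λ) = t^{−m−j} q(ξ, λ) for all t > 0, ξ ≠ 0, λ ∈ ℂ, and such that sup{|q(η, −1)| : 0 < |η| ≤ 1} < ∞. For s ∈ ℂ with Re s < 0 and ξ ≠ 0 set r(ξ) = (1/2)ρ₀|ξ|^m and define p_s(ξ) = −(sin(πs)/π)·∫_{r(ξ)}^∞ ρ^s q(ξ, −ρ) dρ + (r(ξ)/(2π))·∫_{−π}^{π} e^{it} (r(ξ) e^{it})^s q(ξ, r(ξ) e^{it}) dt. Then p_s is homogeneous of degree ms − j: for every t > 0 and ξ ≠ 0 one has p_s(tξ) = t^{ms−j} p_s(ξ), where t^{ms−j} = exp((ms−j)·log t). -/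
import Mathlib


open MeasureTheory
open scoped Real

lemma aux_mul_cpow_pos_real {a : ℝ} (ha : 0 < a) {z : ℂ} (hz : z ≠ 0) (s : ℂ) :
    ((a : ℂ) * z) ^ s = (a : ℂ) ^ s * z ^ s := by
  have ha' : (a : ℂ) ≠ 0 := Complex.ofReal_ne_zero.mpr ha.ne'
  rw [Complex.cpow_def_of_ne_zero (mul_ne_zero ha' hz),
    Complex.log_ofReal_mul ha hz, Complex.ofReal_log ha.le, add_mul, Complex.exp_add,
    ← Complex.cpow_def_of_ne_zero ha', ← Complex.cpow_def_of_ne_zero hz]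

/-- Homogeneity of the symbols `p_{s, ms-j}` of the complex power: if `q(ξ, λ)` is
continuous on `(ℝⁿ \ {0}) × ℂ`, homogeneous of bidegree `-m-j` with parameter weight `m`,
and bounded on `{(η, -1) : 0 < |η| ≤ 1}`, then for `Re s < 0` the function
`p_s(ξ) = (i/2π) ∫_{Γ(ξ)} λ^s q(ξ; λ) dλ` (keyhole contour of radius
`r(ξ) = (1/2) ρ₀ |ξ|^m`, parametrized explicitly) satisfies
`p_s(tξ) = t^{ms-j} p_s(ξ)` for all `t > 0`. -/
theorem stmt3 (n : ℕ) (hn : 1 ≤ n) (m j ρ₀ : ℝ) (hm : 0 < m) (hj : 0 ≤ j) (hρ₀ : 0 < ρ₀)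
    (q : EuclideanSpace ℝ (Fin n) → ℂ → ℂ)
    (hq_cont : ContinuousOn (fun p : EuclideanSpace ℝ (Fin n) × ℂ => q p.1 p.2)
      ({ξ : EuclideanSpace ℝ (Fin n) | ξ ≠ 0} ×ˢ (Set.univ : Set ℂ)))
    (hq_hom : ∀ t : ℝ, 0 < t → ∀ ξ : EuclideanSpace ℝ (Fin n), ξ ≠ 0 → ∀ lam : ℂ,
      q (t • ξ) (((t ^ m : ℝ) : ℂ) * lam) = ((t ^ (-m - j) : ℝ) : ℂ) * q ξ lam)
    (hq_bdd : ∃ M : ℝ, ∀ η : EuclideanSpace ℝ (Fin n), η ≠ 0 → ‖η‖ ≤ 1 →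
      ‖q η (-1)‖ ≤ M)
    (s : ℂ) (hs : s.re < 0)
    (pₛ : EuclideanSpace ℝ (Fin n) → ℂ)
    (hp : ∀ ξ : EuclideanSpace ℝ (Fin n),
      pₛ ξ =
        (-(Complex.sin ((π : ℂ) * s) / (π : ℂ))) *
            (∫ ρ in Set.Ioi ((ρ₀ / 2) * ‖ξ‖ ^ m), (ρ : ℂ) ^ s * q ξ (-ρ))
          + ((((ρ₀ / 2) * ‖ξ‖ ^ m : ℝ) : ℂ) / (2 * (π : ℂ))) *
            (∫ u in (-π : ℝ)..π,
              Complex.exp (Complex.I * u) *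
                ((((ρ₀ / 2) * ‖ξ‖ ^ m : ℝ) : ℂ) * Complex.exp (Complex.I * u)) ^ s *
                q ξ ((((ρ₀ / 2) * ‖ξ‖ ^ m : ℝ) : ℂ) * Complex.exp (Complex.I * u)))) :
    ∀ t : ℝ, 0 < t → ∀ ξ : EuclideanSpace ℝ (Fin n), ξ ≠ 0 →
      pₛ (t • ξ) = (t : ℂ) ^ ((m : ℂ) * s - (j : ℂ)) * pₛ ξ := by
  intro t ht ξ hξ
  set c : ℝ := t ^ m with hc
  set r : ℝ := (ρ₀ / 2) * ‖ξ‖ ^ m with hr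
  have hc0 : 0 < c := Real.rpow_pos_of_pos ht m
  have hr0 : 0 < r := by
    apply mul_pos (by linarith)
    exact Real.rpow_pos_of_pos (norm_pos_iff.mpr hξ) m
  have hnorm : (ρ₀ / 2) * ‖t • ξ‖ ^ m = c * r := by
    rw [hr, hc, norm_smul, Real.norm_eq_abs, abs_of_pos ht,
      Real.mul_rpow ht.le (norm_nonneg ξ)]
    ring
  -- the total homogeneity factor
  set T : ℂ := (t : ℂ) ^ ((m : ℂ) * s - (j : ℂ)) with hT
  have hqh : ∀ lam : ℂ, q (t • ξ) ((c : ℂ) * lam) = ((t ^ (-m - j) : ℝ) : ℂ) * q ξ lam :=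
    fun lam => hq_hom t ht ξ hξ lam
  set K : ℂ := (c : ℂ) ^ s * ((t ^ (-m - j) : ℝ) : ℂ) with hK
  have hfactor : (c : ℂ) * K = T := by
    have h1 : (c : ℂ) = Complex.exp (((m * Real.log t : ℝ)) : ℂ) := by
      rw [hc, Real.rpow_def_of_pos ht, mul_comm (Real.log t) m, Complex.ofReal_exp]
    have h2 : (c : ℂ) ^ s = Complex.exp (((m * Real.log t : ℝ) : ℂ) * s) := by
      rw [Complex.cpow_def_of_ne_zero (Complex.ofReal_ne_zero.mpr hc0.ne'),
        ← Complex.ofReal_log hc0.le, hc, Real.log_rpow ht]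
    have h3 : ((t ^ (-m - j) : ℝ) : ℂ) = Complex.exp ((((-m - j) * Real.log t : ℝ)) : ℂ) := by
      rw [Real.rpow_def_of_pos ht, mul_comm (Real.log t) (-m - j), Complex.ofReal_exp]
    have h4 : T = Complex.exp (((Real.log t : ℝ) : ℂ) * ((m : ℂ) * s - (j : ℂ))) := by
      rw [hT, Complex.cpow_def_of_ne_zero (Complex.ofReal_ne_zero.mpr ht.ne'),
        ← Complex.ofReal_log ht.le]
    rw [hK, h2, h3, h1, h4, ← Complex.exp_add, ← Complex.exp_add]
    congr 1
    push_cast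
    ring
  -- first integral
  have hI1 : (∫ ρ in Set.Ioi (c * r), (ρ : ℂ) ^ s * q (t • ξ) (-ρ))
      = (c : ℂ) * (K * (∫ ρ in Set.Ioi r, (ρ : ℂ) ^ s * q ξ (-ρ))) := by
    have subst := MeasureTheory.integral_comp_mul_left_Ioi
      (fun ρ : ℝ => (ρ : ℂ) ^ s * q (t • ξ) (-ρ)) r hc0
    have key : (∫ x in Set.Ioi r, ((c * x : ℝ) : ℂ) ^ s * q (t • ξ) (-(c * x : ℝ)))
        = K * (∫ ρ in Set.Ioi r, (ρ : ℂ) ^ s * q ξ (-ρ)) := by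
      rw [← MeasureTheory.integral_const_mul]
      refine MeasureTheory.setIntegral_congr_fun measurableSet_Ioi (fun x hx => ?_)
      have hx0 : 0 < x := lt_trans hr0 hx
      have hz : ((x : ℝ) : ℂ) ≠ 0 := Complex.ofReal_ne_zero.mpr hx0.ne'
      have hcast : ((c * x : ℝ) : ℂ) = (c : ℂ) * (x : ℂ) := by push_cast; ring
      have harg : -((c : ℂ) * (x : ℂ)) = (c : ℂ) * (-(x : ℂ)) := by ring
      rw [hcast, harg, hqh, aux_mul_cpow_pos_real hc0 hz s, hK]
      ring
    calc (∫ ρ in Set.Ioi (c * r), (ρ : ℂ) ^ s * q (t • ξ) (-ρ))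
        = c • (c⁻¹ • (∫ ρ in Set.Ioi (c * r), (ρ : ℂ) ^ s * q (t • ξ) (-ρ))) := by
          rw [smul_smul, mul_inv_cancel₀ hc0.ne', one_smul]
      _ = c • (K * (∫ ρ in Set.Ioi r, (ρ : ℂ) ^ s * q ξ (-ρ))) := by rw [← subst, key]
      _ = (c : ℂ) * (K * (∫ ρ in Set.Ioi r, (ρ : ℂ) ^ s * q ξ (-ρ))) := by
          rw [Complex.real_smul]
  -- second integral
  have hI2 : (∫ u in (-π : ℝ)..π,
        Complex.exp (Complex.I * u) *
          (((c * r : ℝ) : ℂ) * Complex.exp (Complex.I * u)) ^ s *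
          q (t • ξ) (((c * r : ℝ) : ℂ) * Complex.exp (Complex.I * u)))
      = K * (∫ u in (-π : ℝ)..π,
          Complex.exp (Complex.I * u) * (((r : ℝ) : ℂ) * Complex.exp (Complex.I * u)) ^ s *
          q ξ (((r : ℝ) : ℂ) * Complex.exp (Complex.I * u))) := by
    rw [← intervalIntegral.integral_const_mul]
    refine intervalIntegral.integral_congr (fun u _ => ?_)
    have hexp : Complex.exp (Complex.I * u) ≠ 0 := Complex.exp_ne_zero _
    have hz : ((r : ℝ) : ℂ) * Complex.exp (Complex.I * u) ≠ 0 :=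
      mul_ne_zero (Complex.ofReal_ne_zero.mpr hr0.ne') hexp
    have hcast : ((c * r : ℝ) : ℂ) * Complex.exp (Complex.I * u)
        = (c : ℂ) * (((r : ℝ) : ℂ) * Complex.exp (Complex.I * u)) := by push_cast; ring
    rw [hcast, aux_mul_cpow_pos_real hc0 hz s, hqh, hK]
    ring
  rw [hp (t • ξ), hp ξ, hnorm, ← hr, hI1, hI2, ← hfactor]
  have hcr : ((c * r : ℝ) : ℂ) = (c : ℂ) * (r : ℂ) := by push_cast; ring
  rw [hcr]
  ring
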